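/- arXiv:2203.05292 — 7 statements merged into one kernel-verified Lean document; each statement's English description precedes it below -/
import Mathlib

section
/- There exists a continuous bijection from Baire space onto the nonnegative reals: there is a function F : (ℕ → ℕ) → ℝ that is continuous with respect to the product topology on ℕ → ℕ (where ℕ carries the discrete topology), is injective, and whose range is exactly {x : ℝ | x ≥ 0}. -/
/-!
With `φ t = t / (1 + t) = 1 / (1 + 1 / t)` the continued fraction reads
`a₀ + φ (a₁ + φ (a₂ + ⋯))`. The map `(k, t) ↦ k + φ t` is a bijection `ℕ × [0, ∞) → [0, ∞)`
with inverse `y ↦ (⌊y⌋, fract y / (1 - fract y))`: reading off floors gives injectivity, and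
iterating the inverse produces the digits of any `x ≥ 0`, hence surjectivity. The map `φ` is not a
contraction, but `dist (φ s) (φ t) ≤ φ (dist s t)` and `φ (1 / (n + 1)) = 1 / (n + 2)`, so the first
`n + 1` digits determine the value up to `1 / (n + 1)`. This makes the truncations converge and
the limit continuous.
-/

open Filter Topology Set

namespace BaireContFrac

noncomputable def phi (t : ℝ) : ℝ := t / (1 + t)

variable {s t : ℝ}

lemma phi_nonneg (ht : 0 ≤ t) : 0 ≤ phi t := by
  unfold phi; positivity

lemma phi_lt_one (ht : 0 ≤ t) : phi t < 1 := by
  rw [phi, div_lt_one (by positivity)]; linarith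

lemma phi_strictMonoOn : StrictMonoOn phi (Ici 0) := by
  intro s (hs : 0 ≤ s) t (ht : 0 ≤ t) hst
  rw [phi, phi, div_lt_div_iff₀ (by positivity) (by positivity)]
  linarith

lemma phi_one_div_add_one (n : ℕ) : phi (1 / (n + 1)) = 1 / (n + 1 + 1) := by
  rw [phi]; field_simp

lemma dist_phi_le (hs : 0 ≤ s) (ht : 0 ≤ t) : dist (phi s) (phi t) ≤ phi (dist s t) := by
  wlog hst : s ≤ t generalizing s t
  · rw [dist_comm, dist_comm s]; exact this ht hs (le_of_not_ge hst)
  have hmono : phi s ≤ phi t := phi_strictMonoOn.monotoneOn hs (hs.trans hst) hst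
  have hsub : phi t - phi s = (t - s) / ((1 + t) * (1 + s)) := by
    rw [phi, phi]; field_simp; ring
  rw [dist_comm, Real.dist_eq, abs_of_nonneg (sub_nonneg.2 hmono), dist_comm, Real.dist_eq,
    abs_of_nonneg (sub_nonneg.2 hst), hsub, phi]
  exact div_le_div_of_nonneg_left (by linarith) (by linarith) (by nlinarith)

lemma continuousAt_phi (ht : 0 ≤ t) : ContinuousAt phi t :=
  continuousAt_id.div (continuousAt_const.add continuousAt_id) (by positivity)

/-- `cf n a t = a₀ + φ (a₁ + φ (⋯ + φ (aₙ + φ t)))`. -/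
noncomputable def cf : ℕ → (ℕ → ℕ) → ℝ → ℝ
  | 0, a, t => a 0 + phi t
  | n + 1, a, t => a 0 + phi (cf n (fun k => a (k + 1)) t)

variable {n : ℕ} {a b : ℕ → ℕ}

lemma cf_nonneg (ht : 0 ≤ t) : 0 ≤ cf n a t := by
  induction n generalizing a with
  | zero => have := phi_nonneg ht; simp only [cf]; positivity
  | succ n ih => have := phi_nonneg (ih (a := fun k => a (k + 1))); simp only [cf]; positivity

lemma cf_succ (n : ℕ) (a : ℕ → ℕ) (t : ℝ) : cf (n + 1) a t = cf n a (a (n + 1) + phi t) := by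
  induction n generalizing a with
  | zero => rfl
  | succ n ih => rw [cf, ih, cf]

lemma cf_congr (h : b ∈ PiNat.cylinder a (n + 1)) : cf n b t = cf n a t := by
  induction n generalizing a b with
  | zero => simp only [cf, h 0 Nat.zero_lt_one]
  | succ n ih =>
    simp only [cf, h 0 (Nat.zero_lt_succ _),
      ih (a := fun k => a (k + 1)) fun i hi => h (i + 1) (by omega)]

lemma dist_cf_le (hs : 0 ≤ s) (ht : 0 ≤ t) : dist (cf n a s) (cf n a t) ≤ 1 / (n + 1) := by
  induction n generalizing a with
  | zero =>
    simpa [cf, dist_add_left] using (dist_phi_le hs ht).trans (phi_lt_one dist_nonneg).le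
  | succ n ih =>
    simp only [cf, dist_add_left, Nat.cast_succ]
    calc dist (phi _) (phi _)
        ≤ phi (dist (cf n (fun k => a (k + 1)) s) (cf n (fun k => a (k + 1)) t)) :=
          dist_phi_le (cf_nonneg hs) (cf_nonneg ht)
      _ ≤ phi (1 / (n + 1)) :=
          phi_strictMonoOn.monotoneOn dist_nonneg (by simp only [mem_Ici]; positivity) ih
      _ = 1 / (n + 1 + 1) := phi_one_div_add_one n

lemma exists_cf_eq_cf {m : ℕ} (h : n ≤ m) (hs : 0 ≤ s) : ∃ t, 0 ≤ t ∧ cf m a s = cf n a t := by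
  induction m, h using Nat.le_induction generalizing s with
  | base => exact ⟨s, hs, rfl⟩
  | succ m _ ih =>
    rw [cf_succ]
    exact ih (by have := phi_nonneg hs; positivity)

lemma eq_cf_of_forall_eq (y : ℕ → ℝ) (hy : ∀ k, y k = a k + phi (y (k + 1))) (n : ℕ) :
    y 0 = cf n a (y (n + 1)) := by
  induction n with
  | zero => exact hy 0
  | succ n ih => rw [cf_succ, ← hy, ih]

lemma cauchySeq_cf (a : ℕ → ℕ) : CauchySeq fun n => cf n a 0 := by
  refine cauchySeq_of_le_tendsto_0' (fun n : ℕ => 1 / ((n : ℝ) + 1)) (fun n m h => ?_)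
    tendsto_one_div_add_atTop_nhds_zero_nat
  obtain ⟨t, ht, hm⟩ := exists_cf_eq_cf (a := a) h le_rfl
  rw [hm]
  exact dist_cf_le le_rfl ht

noncomputable def cfValue (a : ℕ → ℕ) : ℝ := limUnder atTop fun n => cf n a 0

lemma tendsto_cf_cfValue (a : ℕ → ℕ) : Tendsto (fun n => cf n a 0) atTop (𝓝 (cfValue a)) :=
  (cauchySeq_cf a).tendsto_limUnder

lemma cfValue_nonneg (a : ℕ → ℕ) : 0 ≤ cfValue a :=
  ge_of_tendsto' (tendsto_cf_cfValue a) fun _ => cf_nonneg le_rfl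

lemma cfValue_eq (a : ℕ → ℕ) : cfValue a = a 0 + phi (cfValue fun k => a (k + 1)) :=
  tendsto_nhds_unique ((tendsto_cf_cfValue a).comp (tendsto_add_atTop_nat 1))
    (tendsto_const_nhds.add
      ((continuousAt_phi (cfValue_nonneg _)).tendsto.comp (tendsto_cf_cfValue _)))

lemma cfValue_eq_cf (a : ℕ → ℕ) (n : ℕ) :
    cfValue a = cf n a (cfValue fun k => a (k + (n + 1))) :=
  eq_cf_of_forall_eq (fun m => cfValue fun k => a (k + m))
    (fun m => by
      simpa only [zero_add, add_right_comm _ 1, add_assoc] using cfValue_eq fun k => a (k + m)) n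

lemma cfValue_eq_of_forall_eq_cf {x : ℝ} {t : ℕ → ℝ} (ht : ∀ n, 0 ≤ t n)
    (h : ∀ n, x = cf n a (t n)) : cfValue a = x := by
  refine tendsto_nhds_unique (tendsto_cf_cfValue a) (tendsto_iff_dist_tendsto_zero.2 ?_)
  refine squeeze_zero (fun _ => dist_nonneg) (fun n => ?_) tendsto_one_div_add_atTop_nhds_zero_nat
  rw [h n]
  exact dist_cf_le le_rfl (ht n)

lemma dist_cfValue_le (h : b ∈ PiNat.cylinder a (n + 1)) :
    dist (cfValue b) (cfValue a) ≤ 1 / (n + 1) := by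
  rw [cfValue_eq_cf a n, cfValue_eq_cf b n, cf_congr h]
  exact dist_cf_le (cfValue_nonneg _) (cfValue_nonneg _)

theorem continuous_cfValue : Continuous cfValue := by
  refine continuous_iff_continuousAt.2 fun a => Metric.tendsto_nhds.2 fun ε hε => ?_
  obtain ⟨n, hn⟩ := exists_nat_one_div_lt hε
  filter_upwards [(PiNat.isOpen_cylinder _ a (n + 1)).mem_nhds (PiNat.self_mem_cylinder a _)]
    with b hb
  exact (dist_cfValue_le hb).trans_lt hn

lemma floor_cfValue (a : ℕ → ℕ) : ⌊cfValue a⌋₊ = a 0 := by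
  have hrest := cfValue_nonneg fun k => a (k + 1)
  rw [Nat.floor_eq_iff (cfValue_nonneg a), cfValue_eq a]
  constructor <;> linarith [phi_nonneg hrest, phi_lt_one hrest]

theorem cfValue_injective : Function.Injective cfValue := by
  intro a b h
  funext k
  induction k generalizing a b with
  | zero => rw [← floor_cfValue a, ← floor_cfValue b, h]
  | succ k ih =>
    refine ih (a := fun k => a (k + 1)) (b := fun k => b (k + 1)) ?_
    have h0 : a 0 = b 0 := by rw [← floor_cfValue a, ← floor_cfValue b, h]
    rw [cfValue_eq a, cfValue_eq b, h0, add_right_inj] at h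
    exact phi_strictMonoOn.injOn (cfValue_nonneg _) (cfValue_nonneg _) h

noncomputable def remainder (y : ℝ) : ℝ := Int.fract y / (1 - Int.fract y)

lemma remainder_nonneg (y : ℝ) : 0 ≤ remainder y :=
  div_nonneg (Int.fract_nonneg y) (sub_nonneg.2 (Int.fract_lt_one y).le)

lemma floor_add_phi_remainder {y : ℝ} (hy : 0 ≤ y) : ⌊y⌋₊ + phi (remainder y) = y := by
  have h1 : 1 - Int.fract y ≠ 0 := (sub_pos.2 (Int.fract_lt_one y)).ne'
  have hphi : phi (remainder y) = Int.fract y := by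
    rw [phi, remainder]; field_simp; ring
  rw [hphi, natCast_floor_eq_intCast_floor hy, Int.floor_add_fract]

theorem exists_cfValue_eq {x : ℝ} (hx : 0 ≤ x) : ∃ a, cfValue a = x := by
  set y : ℕ → ℝ := fun k => remainder^[k] x
  have hy_succ (k : ℕ) : y (k + 1) = remainder (y k) := Function.iterate_succ_apply' _ _ _
  have hy (k : ℕ) : 0 ≤ y k := by
    cases k with
    | zero => exact hx
    | succ k => exact hy_succ k ▸ remainder_nonneg _
  refine ⟨fun k => ⌊y k⌋₊, cfValue_eq_of_forall_eq_cf (fun n => hy (n + 1)) fun n => ?_⟩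
  refine eq_cf_of_forall_eq y (fun k => ?_) n
  rw [hy_succ, floor_add_phi_remainder (hy k)]

theorem range_cfValue : range cfValue = Ici 0 :=
  Subset.antisymm (range_subset_iff.2 cfValue_nonneg) fun _ hx => exists_cfValue_eq hx

end BaireContFrac

/-- There is a continuous bijection from Baire space `ℕ → ℕ` (with the product
topology, `ℕ` discrete) onto the nonnegative reals. -/
theorem continuous_bijection_Baire_to_nonneg_reals :
    ∃ F : (ℕ → ℕ) → ℝ, Continuous F ∧ Function.Injective F ∧
      Set.range F = {x : ℝ | 0 ≤ x} :=
  ⟨BaireContFrac.cfValue, BaireContFrac.continuous_cfValue, BaireContFrac.cfValue_injective,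
    BaireContFrac.range_cfValue⟩
end

section
/- Let A ⊆ [0,1] and let Y : ℝ → ℕ be injective on A, i.e., for all x, y ∈ A, Y(x) = Y(y) implies x = y; define W : ℝ → ℝ by W(x) = 2^{-(Y(x)+1)} if x ∈ A and W(x) = 0 otherwise. Then W has bounded variation on [0,1]; in fact the total variation of W on [0,1], i.e., the supremum over all partitions 0 = x₀ ≤ x₁ ≤ ... ≤ x_n = 1 of Σ_{i<n} |W(x_{i+1}) − W(x_i)|, is at most 2. -/
lemma geom_finset_sum_le_one (s : Finset ℕ) : ∑ k ∈ s, (1/2:ℝ)^(k+1) ≤ 1 := by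
  have h : Summable (fun k : ℕ => (1/2:ℝ)^k) :=
    summable_geometric_of_lt_one (by norm_num) (by norm_num)
  have hsum : Summable (fun k : ℕ => (1/2:ℝ)^(k+1)) := by
    simp only [pow_succ]
    exact h.mul_right (1/2)
  calc ∑ k ∈ s, (1/2:ℝ)^(k+1)
      ≤ ∑' k, (1/2:ℝ)^(k+1) := Summable.sum_le_tsum s (fun _ _ => by positivity) hsum
    _ = (∑' k, (1/2:ℝ)^k) * (1/2) := by
        simp only [pow_succ]; exact tsum_mul_right
    _ = 2 * (1/2) := by
        rw [tsum_geometric_of_lt_one (by norm_num) (by norm_num)]; norm_num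
    _ = 1 := by norm_num

lemma sum_W_le_one
    (A : Set ℝ)
    (Y : ℝ → ℕ) (hY : ∀ x ∈ A, ∀ y ∈ A, Y x = Y y → x = y)
    (W : ℝ → ℝ)
    (hW₁ : ∀ x ∈ A, W x = 1 / 2 ^ (Y x + 1))
    (hW₂ : ∀ x ∉ A, W x = 0)
    (I : Finset ℕ) (x : ℕ → ℝ) (hinj : Set.InjOn x I) :
    ∑ i ∈ I, W (x i) ≤ 1 := by
  classical
  have key : ∑ i ∈ I, W (x i) = ∑ i ∈ I.filter (fun i => x i ∈ A), W (x i) := by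
    refine (Finset.sum_filter_of_ne ?_).symm
    intro i hi h
    by_contra hxA
    exact h (hW₂ _ hxA)
  rw [key]
  set J := I.filter (fun i => x i ∈ A) with hJ
  have hval : ∀ i ∈ J, W (x i) = (1/2:ℝ)^(Y (x i) + 1) := by
    intro i hi
    rw [hW₁ _ (Finset.mem_filter.mp hi).2]
    rw [div_pow, one_pow]
  rw [Finset.sum_congr rfl hval]
  have hinjY : Set.InjOn (fun i => Y (x i)) J := by
    intro i hi j hj hij
    rw [hJ] at hi hj
    have hiI := Finset.mem_filter.mp hi
    have hjI := Finset.mem_filter.mp hj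
    exact hinj hiI.1 hjI.1 (hY _ hiI.2 _ hjI.2 hij)
  rw [← Finset.sum_image (f := fun k => (1/2:ℝ)^(k+1)) (fun i hi j hj h => hinjY hi hj h)]
  exact geom_finset_sum_le_one _

/-- For `Y` injective on `A ⊆ [0,1]`, the function `W` with `W x = 2^{-(Y x + 1)}`
on `A` and `0` elsewhere has bounded variation on `[0,1]`: every partition sum
`Σ_{i<n} |W(x_{i+1}) − W(x_i)|` is at most `2`, so the total variation is at most `2`. -/
theorem W_has_bounded_variation
    (A : Set ℝ) (hA : A ⊆ Set.Icc (0 : ℝ) 1)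
    (Y : ℝ → ℕ) (hY : ∀ x ∈ A, ∀ y ∈ A, Y x = Y y → x = y)
    (W : ℝ → ℝ)
    (hW₁ : ∀ x ∈ A, W x = 1 / 2 ^ (Y x + 1))
    (hW₂ : ∀ x ∉ A, W x = 0) :
    ∀ (n : ℕ) (x : ℕ → ℝ), x 0 = 0 → x n = 1 → (∀ i < n, x i ≤ x (i + 1)) →
      ∑ i ∈ Finset.range n, |W (x (i + 1)) - W (x i)| ≤ 2 := by
  classical
  intro n x h0 h1 hmono
  have hWnn : ∀ y, 0 ≤ W y := by
    intro y
    by_cases hy : y ∈ A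
    · rw [hW₁ _ hy]; positivity
    · rw [hW₂ _ hy]
  -- monotonicity on [0, n]
  have hmono' : ∀ i j, i ≤ j → j ≤ n → x i ≤ x j := by
    intro i j hij hjn
    induction j with
    | zero => simp_all
    | succ m ih =>
      rcases le_or_gt i m with h | h
      · exact le_trans (ih h (le_trans (Nat.le_succ m) hjn)) (hmono m hjn)
      · have : i = m + 1 := le_antisymm hij h
        simp [this]
  set I := (Finset.range n).filter (fun i => x i ≠ x (i+1)) with hI
  have step1 : ∑ i ∈ Finset.range n, |W (x (i + 1)) - W (x i)|
      ≤ ∑ i ∈ I, (W (x (i+1)) + W (x i)) := by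
    rw [hI, Finset.sum_filter]
    apply Finset.sum_le_sum
    intro i hi
    by_cases h : x i = x (i+1)
    · simp [h]
    · simp only [h, if_true, ne_eq, not_false_eq_true]
      calc |W (x (i + 1)) - W (x i)| ≤ |W (x (i+1))| + |W (x i)| := abs_sub _ _
        _ = W (x (i+1)) + W (x i) := by
            rw [abs_of_nonneg (hWnn _), abs_of_nonneg (hWnn _)]
  -- indices in I have strict increase
  have hstrict : ∀ i ∈ I, x i < x (i+1) := by
    intro i hi
    obtain ⟨hir, hne⟩ := Finset.mem_filter.mp hi
    exact lt_of_le_of_ne (hmono i (Finset.mem_range.mp hir)) hne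
  have hinj1 : Set.InjOn (fun i => x i) I := by
    intro i hi j hj hij
    by_contra hne
    rcases Nat.lt_or_ge i j with h | h
    · have hjn := Finset.mem_range.mp (Finset.mem_filter.mp hj).1
      have : x (i+1) ≤ x j := hmono' (i+1) j h (le_of_lt hjn)
      exact absurd hij (ne_of_lt (lt_of_lt_of_le (hstrict i hi) this))
    · have h' : j < i := lt_of_le_of_ne h (fun e => hne e.symm)
      have hin := Finset.mem_range.mp (Finset.mem_filter.mp hi).1
      have : x (j+1) ≤ x i := hmono' (j+1) i h' (le_of_lt hin)
      exact absurd hij.symm (ne_of_lt (lt_of_lt_of_le (hstrict j hj) this))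
  have hinj2 : Set.InjOn (fun i => x (i+1)) I := by
    intro i hi j hj hij
    by_contra hne
    rcases Nat.lt_or_ge i j with h | h
    · have hjn := Finset.mem_range.mp (Finset.mem_filter.mp hj).1
      have : x (i+1) ≤ x j := hmono' (i+1) j h (le_of_lt hjn)
      exact absurd hij (ne_of_lt (lt_of_le_of_lt this (hstrict j hj)))
    · have h' : j < i := lt_of_le_of_ne h (fun e => hne e.symm)
      have hin := Finset.mem_range.mp (Finset.mem_filter.mp hi).1
      have : x (j+1) ≤ x i := hmono' (j+1) i h' (le_of_lt hin)
      exact absurd hij.symm (ne_of_lt (lt_of_le_of_lt this (hstrict i hi)))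
  have step2 : ∑ i ∈ I, (W (x (i+1)) + W (x i))
      = ∑ i ∈ I, W (x (i+1)) + ∑ i ∈ I, W (x i) := Finset.sum_add_distrib
  have b1 : ∑ i ∈ I, W (x (i+1)) ≤ 1 :=
    sum_W_le_one A Y hY W hW₁ hW₂ I (fun i => x (i+1)) hinj2
  have b2 : ∑ i ∈ I, W (x i) ≤ 1 :=
    sum_W_le_one A Y hY W hW₁ hW₂ I x hinj1
  linarith [step1, step2]
end

section
/- Let A ⊆ [0,1] and let Y : ℝ → ℕ be injective on A, i.e., for all x, y ∈ A, Y(x) = Y(y) implies x = y; define W : ℝ → ℝ by W(x) = 2^{-(Y(x)+1)} if x ∈ A and W(x) = 0 otherwise. Then W is upper semicontinuous on ℝ: for every x₀ ∈ ℝ and every y > W(x₀), W(x) < y for all x in some neighbourhood of x₀. -/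
/-- For `Y` injective on `A ⊆ [0,1]`, the function `W` with `W x = 2^{-(Y x + 1)}`
on `A` and `0` elsewhere is upper semicontinuous on `ℝ`. -/
theorem W_upperSemicontinuous
    (A : Set ℝ) (hA : A ⊆ Set.Icc (0 : ℝ) 1)
    (Y : ℝ → ℕ) (hY : ∀ x ∈ A, ∀ y ∈ A, Y x = Y y → x = y)
    (W : ℝ → ℝ)
    (hW₁ : ∀ x ∈ A, W x = 1 / 2 ^ (Y x + 1))
    (hW₂ : ∀ x ∉ A, W x = 0) :
    UpperSemicontinuous W := by
  intro x y hy
  -- y > W x ≥ 0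
  have hW0 : ∀ z, 0 ≤ W z := by
    intro z
    by_cases hz : z ∈ A
    · rw [hW₁ z hz]; positivity
    · rw [hW₂ z hz]
  have hy0 : 0 < y := lt_of_le_of_lt (hW0 x) hy
  -- the set where W ≥ y is finite
  set S : Set ℝ := {z | y ≤ W z} with hS
  have hSA : S ⊆ A := by
    intro z hz
    by_contra h
    rw [Set.mem_setOf_eq, hW₂ z h] at hz
    exact absurd (le_antisymm hz hy0.le ▸ hy0) (by simpa [hz.antisymm hy0.le] using hy0.not_le)
  obtain ⟨N, hN⟩ : ∃ N : ℕ, (1/2 : ℝ) ^ N < y := exists_pow_lt_of_lt_one hy0 (by norm_num)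
  have hSN : ∀ z ∈ S, Y z ≤ N := by
    intro z hz
    by_contra h
    push_neg at h
    have hzA := hSA hz
    have h1 : y ≤ 1 / 2 ^ (Y z + 1) := by rw [Set.mem_setOf_eq, hW₁ z hzA] at hz; exact hz
    have h2 : (1 / 2 : ℝ) ^ (Y z + 1) ≤ (1 / 2 : ℝ) ^ N :=
      pow_le_pow_of_le_one (by norm_num) (by norm_num) (by omega)
    have : (1 / 2 : ℝ) ^ (Y z + 1) = 1 / 2 ^ (Y z + 1) := by
      rw [div_pow, one_pow]
    linarith [hN, h2, this ▸ h1]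
  have hfin : S.Finite := by
    have himg : (Y '' S).Finite := (Set.finite_Iic N).subset (by
      rintro n ⟨z, hz, rfl⟩; exact hSN z hz)
    refine Set.Finite.of_finite_image himg ?_
    intro a ha b hb hab
    exact hY a (hSA ha) b (hSA hb) hab
  have hxS : x ∉ S := by
    intro h
    exact absurd hy (not_lt.2 h)
  have hopen : IsOpen Sᶜ := hfin.isClosed.isOpen_compl
  filter_upwards [hopen.mem_nhds hxS] with z hz
  exact lt_of_not_ge hz
end

section
/- Let A ⊆ [0,1] and let Y : ℝ → ℕ be injective on A, i.e., for all x, y ∈ A, Y(x) = Y(y) implies x = y; define W : ℝ → ℝ by W(x) = 2^{-(Y(x)+1)} if x ∈ A and W(x) = 0 otherwise, and define Z : ℝ → ℝ by Z(x) = 1 − W(x). Then Z is lower semicontinuous on ℝ: for every x₀ ∈ ℝ and every y < Z(x₀), Z(x) > y for all x in some neighbourhood of x₀. -/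
/-- For `Y` injective on `A ⊆ [0,1]` and `W` with `W x = 2^{-(Y x + 1)}` on `A`
and `0` elsewhere, the function `Z = 1 − W` is lower semicontinuous on `ℝ`. -/
theorem Z_lowerSemicontinuous
    (A : Set ℝ) (hA : A ⊆ Set.Icc (0 : ℝ) 1)
    (Y : ℝ → ℕ) (hY : ∀ x ∈ A, ∀ y ∈ A, Y x = Y y → x = y)
    (W : ℝ → ℝ)
    (hW₁ : ∀ x ∈ A, W x = 1 / 2 ^ (Y x + 1))
    (hW₂ : ∀ x ∉ A, W x = 0)
    (Z : ℝ → ℝ) (hZ : ∀ x, Z x = 1 - W x) :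
    LowerSemicontinuous Z := by
  intro x₀ y hy
  rw [hZ] at hy
  set c : ℝ := 1 - y with hc
  have hW0 : ∀ x, 0 ≤ W x := by
    intro x
    by_cases hx : x ∈ A
    · rw [hW₁ x hx]; positivity
    · rw [hW₂ x hx]
  have hWx₀ : W x₀ < c := by linarith
  have hcpos : 0 < c := lt_of_le_of_lt (hW0 x₀) hWx₀
  -- choose n with (1/2)^n < c
  obtain ⟨n, hn⟩ := exists_pow_lt_of_lt_one hcpos (by norm_num : (1:ℝ)/2 < 1)
  set S : Set ℝ := {x | c ≤ W x} with hS
  have hSA : S ⊆ A := by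
    intro x hx
    by_contra hxA
    have := hW₂ x hxA
    simp only [hS, Set.mem_setOf_eq] at hx
    linarith
  have hfin : S.Finite := by
    have himg : Y '' S ⊆ Set.Iio n := by
      rintro m ⟨x, hxS, rfl⟩
      by_contra hm
      simp only [Set.mem_Iio, not_lt] at hm
      have hxA := hSA hxS
      have hWx : W x = 1 / 2 ^ (Y x + 1) := hW₁ x hxA
      have h1 : ((1:ℝ)/2) ^ (Y x + 1) ≤ ((1:ℝ)/2) ^ n :=
        pow_le_pow_of_le_one (by norm_num) (by norm_num) (by omega)
      have h2 : ((1:ℝ)/2) ^ (Y x + 1) = 1 / 2 ^ (Y x + 1) := by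
        rw [div_pow, one_pow]
      have hxS' : c ≤ W x := hxS
      rw [hWx, ← h2] at hxS'
      linarith
    exact Set.Finite.of_finite_image
      ((Set.finite_Iio n).subset himg)
      (fun a ha b hb hab => hY a (hSA ha) b (hSA hb) hab)
  have hclosed : IsClosed S := hfin.isClosed
  have hx₀ : x₀ ∈ Sᶜ := by
    simp only [hS, Set.mem_compl_iff, Set.mem_setOf_eq, not_le]
    exact hWx₀
  have hnhds : Sᶜ ∈ nhds x₀ := hclosed.isOpen_compl.mem_nhds hx₀
  filter_upwards [hnhds] with x hx
  simp only [hS, Set.mem_compl_iff, Set.mem_setOf_eq, not_le] at hx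
  rw [hZ]
  linarith
end

section
/- Let A ⊆ [0,1] and let Y : ℝ → ℕ be injective on A, i.e., for all x, y ∈ A, Y(x) = Y(y) implies x = y; define W : ℝ → ℝ by W(x) = 2^{-(Y(x)+1)} if x ∈ A and W(x) = 0 otherwise. Then W is Borel measurable; in particular, for every a > 0 the set {x ∈ ℝ : W(x) > a} is finite. -/
/-- For `Y` injective on `A ⊆ [0,1]`, the function `W` with `W x = 2^{-(Y x + 1)}`
on `A` and `0` elsewhere is Borel measurable; in particular `{x | W x > a}` is
finite for every `a > 0`. -/
theorem W_borel_measurable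
    (A : Set ℝ) (hA : A ⊆ Set.Icc (0 : ℝ) 1)
    (Y : ℝ → ℕ) (hY : ∀ x ∈ A, ∀ y ∈ A, Y x = Y y → x = y)
    (W : ℝ → ℝ)
    (hW₁ : ∀ x ∈ A, W x = 1 / 2 ^ (Y x + 1))
    (hW₂ : ∀ x ∉ A, W x = 0) :
    Measurable W ∧ ∀ a : ℝ, a > 0 → {x : ℝ | W x > a}.Finite := by
  have hAc : A.Countable := by
    rw [Set.countable_iff_exists_injOn]
    exact ⟨Y, fun x hx y hy h => hY x hx y hy h⟩
  constructor
  · intro s hs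
    have hsplit : W ⁻¹' s = (W ⁻¹' s ∩ A) ∪ (W ⁻¹' s \ A) := by
      rw [Set.inter_union_diff]
    rw [hsplit]
    apply MeasurableSet.union
    · exact ((hAc.mono Set.inter_subset_right).measurableSet)
    · by_cases h0 : (0 : ℝ) ∈ s
      · have : W ⁻¹' s \ A = Aᶜ := by
          ext x
          simp only [Set.mem_diff, Set.mem_preimage, Set.mem_compl_iff]
          constructor
          · exact fun h => h.2
          · intro hx; exact ⟨by rw [hW₂ x hx]; exact h0, hx⟩
        rw [this]
        exact hAc.measurableSet.compl
      · have : W ⁻¹' s \ A = ∅ := by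
          ext x
          simp only [Set.mem_diff, Set.mem_preimage, Set.mem_empty_iff_false, iff_false]
          rintro ⟨h1, h2⟩
          rw [hW₂ x h2] at h1
          exact h0 h1
        rw [this]
        exact MeasurableSet.empty
  · intro a ha
    obtain ⟨n, hn⟩ := exists_pow_lt_of_lt_one ha (by norm_num : (1 / 2 : ℝ) < 1)
    have hsub : {x : ℝ | W x > a} ⊆ A := by
      intro x hx
      by_contra hxA
      rw [Set.mem_setOf_eq, hW₂ x hxA] at hx
      linarith
    have himg : Y '' {x : ℝ | W x > a} ⊆ Set.Iio n := by
      rintro m ⟨x, hx, rfl⟩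
      have hxA := hsub hx
      have hWx : (1 : ℝ) / 2 ^ (Y x + 1) > a := by
        rw [Set.mem_setOf_eq, hW₁ x hxA] at hx; exact hx
      by_contra hm
      simp only [Set.mem_Iio, not_lt] at hm
      have h1 : (1 / 2 : ℝ) ^ (Y x + 1) ≤ (1 / 2 : ℝ) ^ n := by
        apply pow_le_pow_of_le_one (by norm_num) (by norm_num)
        omega
      rw [div_pow, one_pow] at h1
      linarith
    apply Set.Finite.of_finite_image _ (fun x hx y hy h => hY x (hsub hx) y (hsub hy) h)
    exact (Set.finite_Iio n).subset himg
end

section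
/- Let A ⊆ [0,1] and let Y : ℝ → ℕ be injective on A, i.e., for all x, y ∈ A, Y(x) = Y(y) implies x = y; define W : ℝ → ℝ by W(x) = 2^{-(Y(x)+1)} if x ∈ A and W(x) = 0 otherwise. Then W is cliquish at every x ∈ ℝ: for every ε > 0 and every δ > 0, there exist a < b with the open interval (a, b) nonempty, (a, b) ⊆ (x − δ, x + δ), and |W(z) − W(y)| < ε for all y, z ∈ (a, b). -/
/-- For `Y` injective on `A ⊆ [0,1]`, the function `W` with `W x = 2^{-(Y x + 1)}`
on `A` and `0` elsewhere is cliquish at every point: every neighbourhood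
`(x − δ, x + δ)` contains a nonempty open interval on which `W` oscillates by
less than `ε`. -/
theorem W_cliquish
    (A : Set ℝ) (hA : A ⊆ Set.Icc (0 : ℝ) 1)
    (Y : ℝ → ℕ) (hY : ∀ x ∈ A, ∀ y ∈ A, Y x = Y y → x = y)
    (W : ℝ → ℝ)
    (hW₁ : ∀ x ∈ A, W x = 1 / 2 ^ (Y x + 1))
    (hW₂ : ∀ x ∉ A, W x = 0) :
    ∀ x : ℝ, ∀ ε > (0 : ℝ), ∀ δ > (0 : ℝ), ∃ a b : ℝ, a < b ∧
      Set.Ioo a b ⊆ Set.Ioo (x - δ) (x + δ) ∧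
      ∀ y ∈ Set.Ioo a b, ∀ z ∈ Set.Ioo a b, |W z - W y| < ε := by
  intro x ε hε δ hδ
  -- choose N with (1/2)^N < ε
  obtain ⟨N, hN⟩ := exists_pow_lt_of_lt_one hε (by norm_num : (1:ℝ)/2 < 1)
  -- the set of "big" points
  set S : Set ℝ := {y | y ∈ A ∧ Y y < N} with hS
  have hSfin : S.Finite := by
    have himg : (Y '' S).Finite :=
      (Set.finite_Iio N).subset (by rintro n ⟨y, ⟨_, hy⟩, rfl⟩; exact hy)
    exact Set.Finite.of_finite_image himg
      (fun a ha b hb hab => hY a ha.1 b hb.1 hab)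
  -- key: off S, W is small
  have hsmall : ∀ y : ℝ, y ∉ S → 0 ≤ W y ∧ W y < ε := by
    intro y hy
    by_cases hyA : y ∈ A
    · have hN' : N ≤ Y y := by
        by_contra h
        exact hy ⟨hyA, Nat.lt_of_not_le h⟩
      rw [hW₁ y hyA]
      constructor
      · positivity
      · have h1 : (1:ℝ) / 2 ^ (Y y + 1) = (1/2) ^ (Y y + 1) := by
          rw [div_pow, one_pow]
        rw [h1]
        calc ((1:ℝ)/2) ^ (Y y + 1) ≤ (1/2) ^ N := by
              apply pow_le_pow_of_le_one (by norm_num) (by norm_num) (by omega)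
          _ < ε := hN
    · rw [hW₂ y hyA]; exact ⟨le_refl 0, hε⟩
  -- find an interval inside (x-δ, x+δ) avoiding S
  have main : ∃ a b : ℝ, a < b ∧ Set.Ioo a b ⊆ Set.Ioo (x - δ) (x + δ) ∧
      ∀ y ∈ Set.Ioo a b, y ∉ S := by
    have hTfin : (S ∩ Set.Ioo x (x + δ)).Finite := hSfin.inter_of_left _
    by_cases hT : (S ∩ Set.Ioo x (x + δ)).Nonempty
    · set F := hTfin.toFinset with hF
      have hFne : F.Nonempty := by
        rwa [hF, Set.Finite.toFinset_nonempty]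
      set m := F.min' hFne with hm
      have hmmem : m ∈ S ∩ Set.Ioo x (x + δ) :=
        hTfin.mem_toFinset.mp (F.min'_mem hFne)
      refine ⟨x, m, hmmem.2.1, ?_, ?_⟩
      · intro z hz
        exact ⟨by linarith [hz.1], lt_trans hz.2 hmmem.2.2⟩
      · intro y hy hyS
        have hyT : y ∈ F :=
          hTfin.mem_toFinset.mpr ⟨hyS, hy.1, lt_trans hy.2 hmmem.2.2⟩
        exact absurd (F.min'_le y hyT) (not_le.mpr hy.2)
    · refine ⟨x, x + δ, by linarith, ?_, ?_⟩
      · intro z hz; exact ⟨by linarith [hz.1], hz.2⟩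
      · intro y hy hyS
        exact hT ⟨y, hyS, hy⟩
  obtain ⟨a, b, hab, hsub, havoid⟩ := main
  refine ⟨a, b, hab, hsub, ?_⟩
  intro y hy z hz
  obtain ⟨hy0, hyε⟩ := hsmall y (havoid y hy)
  obtain ⟨hz0, hzε⟩ := hsmall z (havoid z hz)
  rw [abs_sub_lt_iff]
  constructor <;> linarith
end

section
/- Let A ⊆ [0,1] and let Y : ℝ → ℕ be injective on A, i.e., for all x, y ∈ A, Y(x) = Y(y) implies x = y; define W : ℝ → ℝ by W(x) = 2^{-(Y(x)+1)} if x ∈ A and W(x) = 0 otherwise. Then W is Riemann integrable on [0,1] with Riemann integral 0: for every ε > 0 there is δ > 0 such that for every n ≥ 1, every partition 0 = t₀ ≤ t₁ ≤ ... ≤ t_n = 1 with t_{i+1} − t_i < δ for all i < n, and every choice of tags ξ_i ∈ [t_i, t_{i+1}], one has |Σ_{i<n} W(ξ_i)·(t_{i+1} − t_i)| ≤ ε. -/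
/-- For `Y` injective on `A ⊆ [0,1]`, the function `W` with `W x = 2^{-(Y x + 1)}`
on `A` and `0` elsewhere is Riemann integrable on `[0,1]` with integral `0`:
Riemann sums over tagged partitions of small mesh are at most `ε` in absolute value. -/
theorem W_riemann_integrable_with_integral_zero
    (A : Set ℝ) (hA : A ⊆ Set.Icc (0 : ℝ) 1)
    (Y : ℝ → ℕ) (hY : ∀ x ∈ A, ∀ y ∈ A, Y x = Y y → x = y)
    (W : ℝ → ℝ)
    (hW₁ : ∀ x ∈ A, W x = 1 / 2 ^ (Y x + 1))
    (hW₂ : ∀ x ∉ A, W x = 0) :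
    ∀ ε > (0 : ℝ), ∃ δ > (0 : ℝ), ∀ n : ℕ, 1 ≤ n → ∀ t : ℕ → ℝ,
      t 0 = 0 → t n = 1 →
      (∀ i < n, t i ≤ t (i + 1) ∧ t (i + 1) - t i < δ) →
      ∀ ξ : ℕ → ℝ, (∀ i < n, ξ i ∈ Set.Icc (t i) (t (i + 1))) →
        |∑ i ∈ Finset.range n, W (ξ i) * (t (i + 1) - t i)| ≤ ε := by
  intro ε hε
  obtain ⟨k, hk⟩ := exists_pow_lt_of_lt_one (half_pos hε) (by norm_num : (1/2 : ℝ) < 1)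
  refine ⟨ε / (4 * k + 4), by positivity, ?_⟩
  intro n hn t ht0 htn hpart ξ hξ
  set δ : ℝ := ε / (4 * k + 4) with hδ
  have hδpos : 0 < δ := by positivity
  -- monotonicity of the partition points
  have hmono : ∀ a b : ℕ, a ≤ b → b ≤ n → t a ≤ t b := by
    intro a b hab hbn
    induction b with
    | zero => simp [Nat.le_zero.mp hab]
    | succ m ih =>
      rcases Nat.lt_or_ge a (m + 1) with h | h
      · exact le_trans (ih (Nat.lt_succ_iff.mp h) (le_trans (Nat.le_succ m) hbn))
          (hpart m (by omega)).1
      · have : a = m + 1 := le_antisymm hab h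
        simp [this]
  have hWnn : ∀ x, 0 ≤ W x := by
    intro x; by_cases hx : x ∈ A
    · rw [hW₁ x hx]; positivity
    · rw [hW₂ x hx]
  have hWle1 : ∀ x, W x ≤ 1 := by
    intro x; by_cases hx : x ∈ A
    · rw [hW₁ x hx, div_le_one (by positivity)]
      exact one_le_pow₀ (by norm_num)
    · rw [hW₂ x hx]; norm_num
  have hlen : ∀ i < n, 0 ≤ t (i + 1) - t i := fun i hi => sub_nonneg.mpr (hpart i hi).1
  -- if W x is large, then x ∈ A with Y x < k
  have hbig : ∀ x, ε / 2 < W x → x ∈ A ∧ Y x < k := by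
    intro x hx
    by_cases hxA : x ∈ A
    · refine ⟨hxA, ?_⟩
      by_contra hle
      push_neg at hle
      have h1 : W x ≤ (1/2 : ℝ) ^ k := by
        rw [hW₁ x hxA, one_div_pow]
        exact one_div_le_one_div_of_le (by positivity)
          (pow_le_pow_right₀ (by norm_num) (by omega))
      linarith
    · rw [hW₂ x hxA] at hx; linarith
  set B : Finset ℕ := (Finset.range n).filter (fun i => ε / 2 < W (ξ i) ∧ t i < t (i + 1))
    with hB
  -- the sum is nonnegative
  have hsum_nn : 0 ≤ ∑ i ∈ Finset.range n, W (ξ i) * (t (i + 1) - t i) :=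
    Finset.sum_nonneg fun i hi =>
      mul_nonneg (hWnn _) (hlen i (Finset.mem_range.mp hi))
  rw [abs_of_nonneg hsum_nn]
  -- card bound on B
  have hcardB : B.card ≤ 2 * k := by
    have hfiber : ∀ a ∈ B.image ξ, (B.filter fun i => ξ i = a).card ≤ 2 := by
      intro a _
      set F := B.filter fun i => ξ i = a with hF
      by_contra hc
      push_neg at hc
      obtain ⟨p, hp, q, hq, r, hr, hpq, hpr, hqr⟩ := Finset.two_lt_card.mp hc
      have hFmem : ∀ i ∈ F, i < n ∧ ε / 2 < W (ξ i) ∧ t i < t (i + 1) ∧ ξ i = a := by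
        intro i hi
        simp only [hF, hB, Finset.mem_filter, Finset.mem_range] at hi
        tauto
      have key : ∀ i ∈ F, ∀ j ∈ F, i < j → t j = a ∧ t (i + 1) = a := by
        intro i hi j hj hij
        obtain ⟨hin, _, _, hia⟩ := hFmem i hi
        obtain ⟨hjn, _, _, hja⟩ := hFmem j hj
        have hξi := hξ i hin
        have hξj := hξ j hjn
        rw [hia] at hξi; rw [hja] at hξj
        have h1 : a ≤ t (i + 1) := hξi.2
        have h2 : t j ≤ a := hξj.1
        have h3 : t (i + 1) ≤ t j := hmono (i + 1) j (by omega) (by omega)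
        constructor <;> linarith
      have tri : ∀ s m g : ℕ, s ∈ F → m ∈ F → g ∈ F → s < m → m < g → False := by
        intro s m g hs hm hg hsm hmg
        have h1 := (key s hs m hm hsm).1
        have h2 := (key m hm g hg hmg).2
        have h3 := (hFmem m hm).2.2.1
        rw [h1, h2] at h3
        exact lt_irrefl a h3
      rcases Nat.lt_trichotomy p q with h1 | h1 | h1
      · rcases Nat.lt_trichotomy q r with h2 | h2 | h2
        · exact tri p q r hp hq hr h1 h2
        · exact hqr h2
        · rcases Nat.lt_trichotomy p r with h3 | h3 | h3
          · exact tri p r q hp hr hq h3 h2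
          · exact hpr h3
          · exact tri r p q hr hp hq h3 h1
      · exact hpq h1
      · rcases Nat.lt_trichotomy p r with h2 | h2 | h2
        · exact tri q p r hq hp hr h1 h2
        · exact hpr h2
        · rcases Nat.lt_trichotomy q r with h3 | h3 | h3
          · exact tri q r p hq hr hp h3 h2
          · exact hqr h3
          · exact tri r q p hr hq hp h3 h1
    have h1 : B.card ≤ 2 * (B.image ξ).card := Finset.card_le_mul_card_image B 2 hfiber
    have hmaps : ∀ x ∈ B.image ξ, Y x ∈ Finset.range k := by
      intro x hx
      obtain ⟨i, hi, rfl⟩ := Finset.mem_image.mp hx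
      simp only [hB, Finset.mem_filter] at hi
      exact Finset.mem_range.mpr (hbig _ hi.2.1).2
    have hinj : Set.InjOn Y (B.image ξ) := by
      intro x hx y hy hxy
      obtain ⟨i, hi, rfl⟩ := Finset.mem_image.mp hx
      obtain ⟨j, hj, rfl⟩ := Finset.mem_image.mp hy
      simp only [hB, Finset.mem_filter] at hi hj
      exact hY _ (hbig _ hi.2.1).1 _ (hbig _ hj.2.1).1 hxy
    have h2 : (B.image ξ).card ≤ k := by
      calc (B.image ξ).card ≤ (Finset.range k).card :=
            Finset.card_le_card_of_injOn Y hmaps hinj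
        _ = k := Finset.card_range k
    omega
  -- split the sum
  have hsplit := Finset.sum_filter_add_sum_filter_not (Finset.range n)
    (fun i => ε / 2 < W (ξ i) ∧ t i < t (i + 1))
    (fun i => W (ξ i) * (t (i + 1) - t i))
  rw [← hsplit]
  -- bound the bad part
  have hbad : (∑ i ∈ B, W (ξ i) * (t (i + 1) - t i)) ≤ ε / 2 := by
    have h1 : (∑ i ∈ B, W (ξ i) * (t (i + 1) - t i)) ≤ B.card • δ := by
      apply Finset.sum_le_card_nsmul
      intro i hi
      simp only [hB, Finset.mem_filter, Finset.mem_range] at hi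
      calc W (ξ i) * (t (i + 1) - t i) ≤ 1 * (t (i + 1) - t i) :=
            mul_le_mul_of_nonneg_right (hWle1 _) (hlen i hi.1)
        _ = t (i + 1) - t i := one_mul _
        _ ≤ δ := le_of_lt (hpart i hi.1).2
    have h3 : ((2 * k : ℕ) : ℝ) * δ ≤ ε / 2 := by
      rw [hδ]
      rw [mul_div_assoc']
      rw [div_le_div_iff₀ (by positivity) (by norm_num)]
      push_cast
      nlinarith [hε.le, (Nat.cast_nonneg k : (0:ℝ) ≤ k)]
    calc (∑ i ∈ B, W (ξ i) * (t (i + 1) - t i)) ≤ B.card • δ := h1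
      _ = (B.card : ℝ) * δ := by rw [nsmul_eq_mul]
      _ ≤ ((2 * k : ℕ) : ℝ) * δ := by
          exact mul_le_mul_of_nonneg_right (by exact_mod_cast hcardB) hδpos.le
      _ ≤ ε / 2 := h3
  -- bound the good part
  have hgood : (∑ i ∈ (Finset.range n).filter
      (fun i => ¬(ε / 2 < W (ξ i) ∧ t i < t (i + 1))), W (ξ i) * (t (i + 1) - t i)) ≤ ε / 2 := by
    have h1 : (∑ i ∈ (Finset.range n).filter
        (fun i => ¬(ε / 2 < W (ξ i) ∧ t i < t (i + 1))), W (ξ i) * (t (i + 1) - t i))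
        ≤ ∑ i ∈ (Finset.range n).filter
        (fun i => ¬(ε / 2 < W (ξ i) ∧ t i < t (i + 1))), (ε / 2) * (t (i + 1) - t i) := by
      apply Finset.sum_le_sum
      intro i hi
      simp only [Finset.mem_filter, Finset.mem_range, not_and, not_lt] at hi
      obtain ⟨hin, hcond⟩ := hi
      by_cases hw : ε / 2 < W (ξ i)
      · have hdeg : t (i + 1) ≤ t i := hcond hw
        have : t (i + 1) - t i = 0 := le_antisymm (by linarith) (hlen i hin)
        rw [this]; simp
      · push_neg at hw
        exact mul_le_mul_of_nonneg_right hw (hlen i hin)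
    have h2 : (∑ i ∈ (Finset.range n).filter
        (fun i => ¬(ε / 2 < W (ξ i) ∧ t i < t (i + 1))), (ε / 2) * (t (i + 1) - t i))
        ≤ ∑ i ∈ Finset.range n, (ε / 2) * (t (i + 1) - t i) := by
      apply Finset.sum_le_sum_of_subset_of_nonneg (Finset.filter_subset _ _)
      intro i hi _
      exact mul_nonneg (by linarith) (hlen i (Finset.mem_range.mp hi))
    have h3 : (∑ i ∈ Finset.range n, (ε / 2) * (t (i + 1) - t i)) = ε / 2 := by
      rw [← Finset.mul_sum, Finset.sum_range_sub, htn, ht0]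
      ring
    linarith
  linarith
end
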